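/- Let n ≥ 2, let U ⊆ ℝⁿ be open, let f : U → ℝ be a positive C³ function and let u : U → ℝ be a C³ function satisfying Δu = −1 + (Δf/f)·u on U, and define the vector field X = f·∇(|∇u|²) + (2/n)·f·∇u − (Hess f)·∇(u²) − (2/n)·u·∇f − 2u·(Hess u)·∇f + (2u²/f)·(Hess f)·∇f on U. If at every point x ∈ U the matrix (Δf(x))·Iₙ − Hess f(x) is positive semidefinite (the flat substatic condition), then div X ≥ 0 on U; more precisely, div X ≥ 2f·‖Hess u − (Δu/n)·Iₙ − (u/f)·(Hess f − (Δf/n)·Iₙ)‖_F² at every point of U. -/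

import Mathlib

open scoped BigOperators

/-- Partial derivative `∂ᵢ v` of a scalar function on `ℝⁿ = Fin n → ℝ`. -/
noncomputable def pd {n : ℕ} (i : Fin n) (v : (Fin n → ℝ) → ℝ) (x : Fin n → ℝ) : ℝ :=
  fderiv ℝ v x (Pi.single i 1)

/-- Gradient `∇v`. -/
noncomputable def grad {n : ℕ} (v : (Fin n → ℝ) → ℝ) (x : Fin n → ℝ) : Fin n → ℝ :=
  fun i => pd i v x

/-- Hessian matrix `(∂ᵢ∂ⱼ v)ᵢⱼ`. -/
noncomputable def hess {n : ℕ} (v : (Fin n → ℝ) → ℝ) (x : Fin n → ℝ) :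
    Matrix (Fin n) (Fin n) ℝ :=
  fun i j => pd i (fun y => pd j v y) x

/-- Laplacian `Δv = tr (Hess v)`. -/
noncomputable def lap {n : ℕ} (v : (Fin n → ℝ) → ℝ) (x : Fin n → ℝ) : ℝ :=
  ∑ i, hess v x i i

/-- Divergence of a vector field. -/
noncomputable def divg {n : ℕ} (X : (Fin n → ℝ) → (Fin n → ℝ)) (x : Fin n → ℝ) : ℝ :=
  ∑ i, pd i (fun y => X y i) x

/-- Euclidean inner product. -/
def dotp {n : ℕ} (a b : Fin n → ℝ) : ℝ := ∑ i, a i * b i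

/-- Frobenius inner product of matrices. -/
def frobInner {n : ℕ} (A B : Matrix (Fin n) (Fin n) ℝ) : ℝ := ∑ i, ∑ j, A i j * B i j

/-- Squared Frobenius norm of a matrix. -/
def frobSq {n : ℕ} (A : Matrix (Fin n) (Fin n) ℝ) : ℝ := ∑ i, ∑ j, (A i j) ^ 2


/-!
Since `∇|∇u|² = 2 (Hess u) ∇u` and `∇(u²) = 2u ∇u`, each summand of `X` has the form
`φ • (Hess ψ) ∇χ` or `φ • ∇χ`, and in flat space
`div ((Hess ψ) ∇χ) = ⟨∇Δψ, ∇χ⟩ + ⟨Hess ψ, Hess χ⟩_F`, because symmetry of third derivatives turns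
the divergence of the Hessian into the gradient of the Laplacian. Differentiating the equation gives
`∇Δu = (u/f) ∇Δf + (Δf/f) ∇u - (u Δf/f²) ∇f`; substituting it, all third derivatives cancel and,
with `w = ∇u - (u/f) ∇f`,

  `div X = 2f ‖Hess u - (Δu/n) Iₙ - (u/f) (Hess f - (Δf/n) Iₙ)‖_F² + 2 ⟨(Δf Iₙ - Hess f) w, w⟩`,

where the trace terms come out exactly because `Δu - (u/f) Δf = -1`. The substatic condition makes
the last term nonnegative.
-/

open Filter Topology Matrix

section PartialDerivative

variable {n : ℕ} {i j : Fin n} {v w : (Fin n → ℝ) → ℝ} {x : Fin n → ℝ}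

lemma pd_congr (h : v =ᶠ[𝓝 x] w) : pd i v x = pd i w x := by
  rw [pd, pd, h.fderiv_eq]

lemma pd_add (hv : DifferentiableAt ℝ v x) (hw : DifferentiableAt ℝ w x) :
    pd i (fun y => v y + w y) x = pd i v x + pd i w x := by
  simp [pd, fderiv_fun_add hv hw]

lemma pd_sub (hv : DifferentiableAt ℝ v x) (hw : DifferentiableAt ℝ w x) :
    pd i (fun y => v y - w y) x = pd i v x - pd i w x := by
  simp [pd, fderiv_fun_sub hv hw]

lemma pd_const_add (c : ℝ) : pd i (fun y => c + v y) x = pd i v x := by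
  simp [pd, fderiv_const_add]

lemma pd_mul (hv : DifferentiableAt ℝ v x) (hw : DifferentiableAt ℝ w x) :
    pd i (fun y => v y * w y) x = pd i v x * w x + v x * pd i w x := by
  simp [pd, fderiv_fun_mul hv hw]
  ring

lemma pd_const_mul (c : ℝ) (hv : DifferentiableAt ℝ v x) :
    pd i (fun y => c * v y) x = c * pd i v x := by
  simp [pd, fderiv_const_mul hv]

lemma pd_sum {ι : Type*} (s : Finset ι) {V : ι → (Fin n → ℝ) → ℝ}
    (hV : ∀ k ∈ s, DifferentiableAt ℝ (V k) x) :
    pd i (fun y => ∑ k ∈ s, V k y) x = ∑ k ∈ s, pd i (V k) x := by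
  simp [pd, fderiv_fun_sum hV]

lemma pd_inv (hw : DifferentiableAt ℝ w x) (hw0 : w x ≠ 0) :
    pd i (fun y => (w y)⁻¹) x = -pd i w x / w x ^ 2 := by
  rw [pd, fderiv_fun_comp x (differentiableAt_inv hw0) hw, fderiv_inv]
  simp [pd]
  ring

lemma pd_div (hv : DifferentiableAt ℝ v x) (hw : DifferentiableAt ℝ w x) (hw0 : w x ≠ 0) :
    pd i (fun y => v y / w y) x = (pd i v x * w x - v x * pd i w x) / w x ^ 2 := by
  simp only [div_eq_mul_inv]
  rw [pd_mul hv (hw.fun_inv hw0), pd_inv hw hw0]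
  field_simp
  ring

lemma ContDiffAt.contDiffAt_pd {k m : WithTop ℕ∞} (hv : ContDiffAt ℝ k v x) (hmk : m + 1 ≤ k)
    (i : Fin n) : ContDiffAt ℝ m (pd i v) x :=
  (hv.fderiv_right hmk).clm_apply contDiffAt_const

lemma ContDiffAt.differentiableAt_pd (hv : ContDiffAt ℝ 2 v x) :
    DifferentiableAt ℝ (pd i v) x :=
  (hv.contDiffAt_pd (m := 1) (by norm_num) i).differentiableAt one_ne_zero

lemma ContDiffAt.differentiableAt_pd_pd (hv : ContDiffAt ℝ 3 v x) :
    DifferentiableAt ℝ (pd i (pd j v)) x :=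
  ((hv.contDiffAt_pd (m := 2) (by norm_num) j).contDiffAt_pd (m := 1) (by norm_num) i)
    |>.differentiableAt one_ne_zero

lemma pd_pd_comm (hv : ContDiffAt ℝ 2 v x) : pd i (pd j v) x = pd j (pd i v) x := by
  have hd : DifferentiableAt ℝ (fderiv ℝ v) x :=
    (hv.fderiv_right (m := 1) le_rfl).differentiableAt one_ne_zero
  have hsecond : ∀ a b : Fin n,
      pd a (pd b v) x = fderiv ℝ (fderiv ℝ v) x (Pi.single a 1) (Pi.single b 1) := by
    intro a b
    change fderiv ℝ (fun y => fderiv ℝ v y (Pi.single b 1)) x (Pi.single a 1) = _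
    simp [fderiv_clm_apply hd (differentiableAt_const _)]
  rw [hsecond, hsecond, hv.isSymmSndFDerivAt (by simp)]

end PartialDerivative

lemma Matrix.IsSymm.dotProduct_mulVec_comm {m R : Type*} [Fintype m] [CommSemiring R]
    {A : Matrix m m R} (hA : A.IsSymm) (v w : m → R) : v ⬝ᵥ (A *ᵥ w) = w ⬝ᵥ (A *ᵥ v) := by
  rw [Matrix.dotProduct_mulVec, ← Matrix.mulVec_transpose, hA.eq, dotProduct_comm]

section Frobenius

variable {n : ℕ}

lemma frobSq_nonneg (A : Matrix (Fin n) (Fin n) ℝ) : 0 ≤ frobSq A :=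
  Finset.sum_nonneg fun _ _ => Finset.sum_nonneg fun _ _ => sq_nonneg _

lemma frobInner_comm (A B : Matrix (Fin n) (Fin n) ℝ) : frobInner A B = frobInner B A := by
  simp only [frobInner, mul_comm]

lemma frobSq_sub_smul (A B : Matrix (Fin n) (Fin n) ℝ) (t : ℝ) :
    frobSq (A - t • B) = frobInner A A - 2 * t * frobInner A B + t ^ 2 * frobInner B B := by
  simp only [frobSq, frobInner, Matrix.sub_apply, Matrix.smul_apply, smul_eq_mul, Finset.mul_sum,
    ← Finset.sum_sub_distrib, ← Finset.sum_add_distrib]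
  exact Finset.sum_congr rfl fun _ _ => Finset.sum_congr rfl fun _ _ => by ring

lemma frobSq_add_smul_one (A : Matrix (Fin n) (Fin n) ℝ) (c : ℝ) :
    frobSq (A + c • 1) = frobSq A + 2 * c * A.trace + n * c ^ 2 := by
  have hrow : ∀ i, ∑ j, (A + c • 1) i j ^ 2 = ∑ j, A i j ^ 2 + 2 * c * A i i + c ^ 2 := by
    intro i
    simp [Matrix.one_apply, add_sq, Finset.sum_add_distrib]
    ring
  simp only [frobSq, hrow, Finset.sum_add_distrib, ← Finset.mul_sum]
  simp [Matrix.trace]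

/-- `a, b, p, q, P, Q, F, V, L, M` stand for `∇f, ∇u, ∇Δf, ∇Δu, Hess f, Hess u, f, u, Δf, Δu`. -/
theorem divergence_expansion_eq (hn : (n : ℝ) ≠ 0) {F V L M : ℝ} (hF : F ≠ 0)
    {a b p q : Fin n → ℝ} {P Q : Matrix (Fin n) (Fin n) ℝ} (hP : P.IsSymm) (hQ : Q.IsSymm)
    (htrP : P.trace = L) (htrQ : Q.trace = M) (hM : M = -1 + L / F * V)
    (hq : q = (V / F) • p + (L / F) • b - (L * V / F ^ 2) • a) :
    2 * (a ⬝ᵥ (Q *ᵥ b)) + 2 * F * (q ⬝ᵥ b + frobInner Q Q) + 2 / n * (a ⬝ᵥ b + F * M)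
      - 2 * (b ⬝ᵥ (P *ᵥ b) + V * (p ⬝ᵥ b + frobInner P Q)) - 2 / n * (b ⬝ᵥ a + V * L)
      - 2 * (b ⬝ᵥ (Q *ᵥ a) + V * (q ⬝ᵥ a + frobInner Q P))
      + 4 * V / F * (b ⬝ᵥ (P *ᵥ a)) - 2 * V ^ 2 / F ^ 2 * (a ⬝ᵥ (P *ᵥ a))
      + 2 * V ^ 2 / F * (p ⬝ᵥ a + frobInner P P)
    = 2 * F * frobSq (Q - (M / n) • 1 - (V / F) • (P - (L / n) • 1))
      + 2 * ((b - (V / F) • a) ⬝ᵥ ((L • 1 - P) *ᵥ (b - (V / F) • a))) := by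
  have htraceless : Q - (M / n) • 1 - (V / F) • (P - (L / n) • 1)
      = (Q - (V / F) • P) + (1 / n : ℝ) • (1 : Matrix (Fin n) (Fin n) ℝ) := by
    rw [hM]
    module
  rw [htraceless, frobSq_add_smul_one, frobSq_sub_smul, Matrix.trace_sub, Matrix.trace_smul,
    htrP, htrQ, hq, hM]
  simp only [Matrix.sub_mulVec, Matrix.smul_mulVec, Matrix.one_mulVec, Matrix.mulVec_sub,
    Matrix.mulVec_smul, dotProduct_sub, sub_dotProduct, dotProduct_smul, smul_dotProduct,
    add_dotProduct, smul_eq_mul, hP.dotProduct_mulVec_comm a b, hQ.dotProduct_mulVec_comm b a,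
    frobInner_comm Q P, dotProduct_comm a b]
  field_simp
  ring

end Frobenius

section VectorCalculus

variable {n : ℕ} {v w : (Fin n → ℝ) → ℝ} {x : Fin n → ℝ} {X Y : (Fin n → ℝ) → (Fin n → ℝ)}

lemma ContDiffAt.differentiableAt_grad (hv : ContDiffAt ℝ 2 v x) :
    DifferentiableAt ℝ (grad v) x :=
  differentiableAt_pi.2 fun _ => hv.differentiableAt_pd

lemma ContDiffAt.differentiableAt_lap (hv : ContDiffAt ℝ 3 v x) :
    DifferentiableAt ℝ (lap v) x :=
  DifferentiableAt.fun_sum fun _ _ => hv.differentiableAt_pd_pd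

lemma isSymm_hess (hv : ContDiffAt ℝ 2 v x) : (hess v x).IsSymm :=
  Matrix.IsSymm.ext fun _ _ => pd_pd_comm hv

lemma grad_const_mul (c : ℝ) (hv : DifferentiableAt ℝ v x) :
    grad (fun y => c * v y) x = c • grad v x :=
  funext fun _ => pd_const_mul c hv

lemma grad_sq (hv : DifferentiableAt ℝ v x) :
    grad (fun y => v y ^ 2) x = (2 * v x) • grad v x := by
  ext i
  simp only [sq, grad, pd_mul hv hv, Pi.smul_apply, smul_eq_mul]
  ring

lemma grad_div (hv : DifferentiableAt ℝ v x) (hw : DifferentiableAt ℝ w x) (hw0 : w x ≠ 0) :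
    grad (fun y => v y / w y) x = (1 / w x) • grad v x - (v x / w x ^ 2) • grad w x := by
  ext i
  simp only [grad, pd_div hv hw hw0, Pi.sub_apply, Pi.smul_apply, smul_eq_mul]
  field_simp

lemma grad_dotp_grad_self (hv : ContDiffAt ℝ 2 v x) :
    grad (fun y => dotp (grad v y) (grad v y)) x = (2 : ℝ) • (hess v x *ᵥ grad v x) := by
  have hd : ∀ k ∈ Finset.univ, DifferentiableAt ℝ (fun y => pd k v y * pd k v y) x :=
    fun _ _ => hv.differentiableAt_pd.mul hv.differentiableAt_pd
  ext i
  simp only [grad, dotp]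
  rw [pd_sum _ hd]
  simp only [pd_mul hv.differentiableAt_pd hv.differentiableAt_pd, Pi.smul_apply, smul_eq_mul,
    Matrix.mulVec, dotProduct, hess, grad, Finset.mul_sum]
  exact Finset.sum_congr rfl fun _ _ => by ring

lemma divg_congr (h : X =ᶠ[𝓝 x] Y) : divg X x = divg Y x :=
  Finset.sum_congr rfl fun i _ => pd_congr (h.fun_comp (· i))

lemma divg_add (hX : DifferentiableAt ℝ X x) (hY : DifferentiableAt ℝ Y x) :
    divg (fun y => X y + Y y) x = divg X x + divg Y x := by
  simp only [divg, Pi.add_apply, pd_add (differentiableAt_pi.1 hX _) (differentiableAt_pi.1 hY _),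
    Finset.sum_add_distrib]

lemma divg_sub (hX : DifferentiableAt ℝ X x) (hY : DifferentiableAt ℝ Y x) :
    divg (fun y => X y - Y y) x = divg X x - divg Y x := by
  simp only [divg, Pi.sub_apply, pd_sub (differentiableAt_pi.1 hX _) (differentiableAt_pi.1 hY _),
    Finset.sum_sub_distrib]

lemma divg_smul (hv : DifferentiableAt ℝ v x) (hX : DifferentiableAt ℝ X x) :
    divg (fun y => v y • X y) x = grad v x ⬝ᵥ X x + v x * divg X x := by
  simp only [divg, Pi.smul_apply, smul_eq_mul, pd_mul hv (differentiableAt_pi.1 hX _),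
    Finset.sum_add_distrib, Finset.mul_sum, dotProduct, grad]

lemma divg_grad : divg (grad v) x = lap v x := rfl

lemma sum_pd_hess_eq_pd_lap (hv : ContDiffAt ℝ 3 v x) (j : Fin n) :
    ∑ i, pd i (fun y => hess v y i j) x = pd j (lap v) x := by
  have hsymm : ∀ i, (fun y => hess v y i j) =ᶠ[𝓝 x] pd j (pd i v) :=
    fun i => (hv.eventually (by simp)).mono fun y hy => pd_pd_comm (hy.of_le (by norm_num))
  change _ = pd j (fun y => ∑ i, pd i (pd i v) y) x
  rw [pd_sum _ fun i _ => hv.differentiableAt_pd_pd]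
  refine Finset.sum_congr rfl fun i _ => ?_
  rw [pd_congr (hsymm i)]
  exact pd_pd_comm (hv.contDiffAt_pd (m := 2) (by norm_num) i)

lemma differentiableAt_hess_mul_grad (hv : ContDiffAt ℝ 3 v x) (hw : ContDiffAt ℝ 2 w x)
    (i j : Fin n) : DifferentiableAt ℝ (fun y => hess v y i j * grad w y j) x :=
  hv.differentiableAt_pd_pd.mul hw.differentiableAt_pd

lemma differentiableAt_hess_mulVec_grad (hv : ContDiffAt ℝ 3 v x) (hw : ContDiffAt ℝ 2 w x) :
    DifferentiableAt ℝ (fun y => hess v y *ᵥ grad w y) x :=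
  differentiableAt_pi.2 fun i =>
    DifferentiableAt.fun_sum (u := Finset.univ) fun j _ => differentiableAt_hess_mul_grad hv hw i j

lemma divg_hess_mulVec_grad (hv : ContDiffAt ℝ 3 v x) (hw : ContDiffAt ℝ 2 w x) :
    divg (fun y => hess v y *ᵥ grad w y) x
      = grad (lap v) x ⬝ᵥ grad w x + frobInner (hess v x) (hess w x) := by
  have hterm : ∀ i j : Fin n, pd i (fun y => hess v y i j * grad w y j) x
      = pd i (fun y => hess v y i j) x * grad w x j + hess v x i j * hess w x i j :=
    fun _ _ => pd_mul hv.differentiableAt_pd_pd hw.differentiableAt_pd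
  simp only [divg, Matrix.mulVec, dotProduct]
  rw [Finset.sum_congr rfl fun i _ => pd_sum _ fun j _ => differentiableAt_hess_mul_grad hv hw i j]
  simp only [hterm, Finset.sum_add_distrib, frobInner]
  rw [Finset.sum_comm]
  simp only [← Finset.sum_mul, sum_pd_hess_eq_pd_lap hv, grad]

end VectorCalculus

section SubstaticField

variable {n : ℕ} {f u : (Fin n → ℝ) → ℝ} {x : Fin n → ℝ}

noncomputable def substaticField (f u : (Fin n → ℝ) → ℝ) (y : Fin n → ℝ) : Fin n → ℝ :=
  f y • grad (fun z => dotp (grad u z) (grad u z)) y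
    + (2 / (n : ℝ)) • (f y • grad u y)
    - (hess f y).mulVec (grad (fun z => (u z) ^ 2) y)
    - (2 / (n : ℝ)) • (u y • grad f y)
    - (2 * u y) • ((hess u y).mulVec (grad f y))
    + (2 * (u y) ^ 2 / f y) • ((hess f y).mulVec (grad f y))

lemma substaticField_eventuallyEq (hu : ContDiffAt ℝ 3 u x) :
    substaticField f u =ᶠ[𝓝 x] fun y =>
      (2 * f y) • (hess u y *ᵥ grad u y) + (2 / n * f y) • grad u y
        - (2 * u y) • (hess f y *ᵥ grad u y) - (2 / n * u y) • grad f y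
        - (2 * u y) • (hess u y *ᵥ grad f y) + (2 * u y ^ 2 / f y) • (hess f y *ᵥ grad f y) := by
  filter_upwards [hu.eventually (by simp)] with y hy
  rw [substaticField, grad_dotp_grad_self (hy.of_le (by norm_num)),
    grad_sq (hy.differentiableAt (by norm_num)), Matrix.mulVec_smul]
  simp only [smul_smul]
  module

lemma grad_lap_of_eventuallyEq (hf : ContDiffAt ℝ 3 f x) (hu : DifferentiableAt ℝ u x)
    (hf0 : f x ≠ 0) (hpde : ∀ᶠ y in 𝓝 x, lap u y = -1 + lap f y / f y * u y) :
    grad (lap u) x = (u x / f x) • grad (lap f) x + (lap f x / f x) • grad u x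
      - (lap f x * u x / f x ^ 2) • grad f x := by
  have df : DifferentiableAt ℝ f x := hf.differentiableAt (by norm_num)
  have dlap := hf.differentiableAt_lap
  ext j
  simp only [grad, Pi.add_apply, Pi.sub_apply, Pi.smul_apply, smul_eq_mul]
  rw [pd_congr hpde, pd_const_add, pd_mul (by fun_prop (disch := exact hf0)) hu,
    pd_div dlap df hf0]
  field_simp
  ring

lemma divg_substaticField (hn : (n : ℝ) ≠ 0) (hf : ContDiffAt ℝ 3 f x) (hu : ContDiffAt ℝ 3 u x)
    (hf0 : f x ≠ 0) (hpde : ∀ᶠ y in 𝓝 x, lap u y = -1 + lap f y / f y * u y) :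
    divg (substaticField f u) x
      = 2 * f x * frobSq (hess u x - (lap u x / n) • 1
          - (u x / f x) • (hess f x - (lap f x / n) • 1))
        + 2 * ((grad u x - (u x / f x) • grad f x)
          ⬝ᵥ ((lap f x • 1 - hess f x) *ᵥ (grad u x - (u x / f x) • grad f x))) := by
  have hf2 : ContDiffAt ℝ 2 f x := hf.of_le (by norm_num)
  have hu2 : ContDiffAt ℝ 2 u x := hu.of_le (by norm_num)
  have df : DifferentiableAt ℝ f x := hf.differentiableAt (by norm_num)
  have du : DifferentiableAt ℝ u x := hu.differentiableAt (by norm_num)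
  have dgf := hf2.differentiableAt_grad
  have dgu := hu2.differentiableAt_grad
  have dHuu := differentiableAt_hess_mulVec_grad hu hu2
  have dHfu := differentiableAt_hess_mulVec_grad hf hu2
  have dHuf := differentiableAt_hess_mulVec_grad hu hf2
  have dHff := differentiableAt_hess_mulVec_grad hf hf2
  rw [divg_congr (substaticField_eventuallyEq hu), divg_add (by fun_prop) (by fun_prop),
    divg_sub (by fun_prop) (by fun_prop), divg_sub (by fun_prop) (by fun_prop),
    divg_sub (by fun_prop) (by fun_prop), divg_add (by fun_prop) (by fun_prop),
    divg_smul (by fun_prop) dHuu, divg_smul (by fun_prop) dgu, divg_smul (by fun_prop) dHfu,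
    divg_smul (by fun_prop) dgf, divg_smul (by fun_prop) dHuf,
    divg_smul (by fun_prop (disch := exact hf0)) dHff,
    divg_hess_mulVec_grad hu hu2, divg_hess_mulVec_grad hf hu2, divg_hess_mulVec_grad hu hf2,
    divg_hess_mulVec_grad hf hf2, divg_grad, divg_grad, grad_const_mul _ df, grad_const_mul _ df,
    grad_const_mul _ du, grad_const_mul _ du, grad_div (by fun_prop) df hf0,
    grad_const_mul _ (by fun_prop), grad_sq du]
  have hexpand := divergence_expansion_eq hn hf0 (isSymm_hess hf2) (isSymm_hess hu2)
    (L := lap f x) (M := lap u x) rfl rfl hpde.self_of_nhds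
    (grad_lap_of_eventuallyEq hf du hf0 hpde)
  simp only [smul_dotProduct, sub_dotProduct, smul_eq_mul] at hexpand ⊢
  linear_combination hexpand

end SubstaticField

theorem stmt1 {n : ℕ} (hn : 2 ≤ n) {U : Set (Fin n → ℝ)} (hU : IsOpen U)
    (f u : (Fin n → ℝ) → ℝ)
    (hf : ContDiffOn ℝ 3 f U) (hfpos : ∀ x ∈ U, 0 < f x)
    (hu : ContDiffOn ℝ 3 u U)
    (heq : ∀ x ∈ U, lap u x = -1 + (lap f x / f x) * u x)
    (X : (Fin n → ℝ) → (Fin n → ℝ))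
    (hX : ∀ y, X y =
      f y • grad (fun z => dotp (grad u z) (grad u z)) y
      + (2 / (n : ℝ)) • (f y • grad u y)
      - (hess f y).mulVec (grad (fun z => (u z) ^ 2) y)
      - (2 / (n : ℝ)) • (u y • grad f y)
      - (2 * u y) • ((hess u y).mulVec (grad f y))
      + (2 * (u y) ^ 2 / f y) • ((hess f y).mulVec (grad f y)))
    (hsubstatic : ∀ x ∈ U,
      (lap f x • (1 : Matrix (Fin n) (Fin n) ℝ) - hess f x).PosSemidef) :
    ∀ x ∈ U,
      0 ≤ divg X x ∧
      2 * f x *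
        frobSq (hess u x - (lap u x / (n : ℝ)) • (1 : Matrix (Fin n) (Fin n) ℝ)
          - (u x / f x) • (hess f x - (lap f x / (n : ℝ)) • (1 : Matrix (Fin n) (Fin n) ℝ)))
        ≤ divg X x := by
  intro x hx
  have hUx : U ∈ 𝓝 x := hU.mem_nhds hx
  have hdiv := divg_substaticField (Nat.cast_ne_zero.2 (by omega)) (hf.contDiffAt hUx)
    (hu.contDiffAt hUx) (hfpos x hx).ne' (eventually_of_mem hUx heq)
  rw [← show X = substaticField f u from funext hX] at hdiv
  have hquad := (hsubstatic x hx).dotProduct_mulVec_nonneg (grad u x - (u x / f x) • grad f x)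
  rw [star_trivial] at hquad
  have hfrob := frobSq_nonneg
    (hess u x - (lap u x / n) • 1 - (u x / f x) • (hess f x - (lap f x / n) • 1))
  have hfx := hfpos x hx
  rw [hdiv]
  constructor <;> nlinarith
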